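/- arXiv:2201.12788 — 2 statements merged into one kernel-verified Lean document; each statement's English description precedes it below -/
import Mathlib

section
/- Let α > 0, ω = (ω₁,ω₂,ω₃) ∈ S² and λ ∈ ℝ with ⟨z₁, ω⟩ > λ, where z₁ = (0,α,0). If the reflection T_{λ,ω}(z₁) = z₁ − 2ω(⟨ω,z₁⟩ − λ) lies in K^α, then |ω₃| ≤ −α ω₁ ≤ ω₂ and α ≥ (ω₂ − α ω₁)(⟨z₁,ω⟩ − λ); in particular ω₁ ≤ 0 ≤ ω₂. -/
open scoped RealInnerProductSpace

/-- A point of ℝ³. -/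
noncomputable def pt3 (a b c : ℝ) : EuclideanSpace ℝ (Fin 3) :=
  (WithLp.equiv 2 (Fin 3 → ℝ)).symm ![a, b, c]

/-- The tetrahedron `K^α = {x : |x₃| ≤ α x₁, |x₂| ≤ α(1 - x₁)}`. -/
noncomputable def Kα (α : ℝ) : Set (EuclideanSpace ℝ (Fin 3)) :=
  {x | |x 2| ≤ α * x 0 ∧ |x 1| ≤ α * (1 - x 0)}

/-- The reflection `T_{λ,ω}(x) = x - 2ω(⟨ω,x⟩ - λ)`. -/
noncomputable def reflMap (ω : EuclideanSpace ℝ (Fin 3)) (lam : ℝ)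
    (x : EuclideanSpace ℝ (Fin 3)) : EuclideanSpace ℝ (Fin 3) :=
  x - (2 * (⟪ω, x⟫ - lam)) • ω

/-! Writing `t = ⟨z₁, ω⟩ - λ > 0`, the reflected point is `(-2tω₁, α - 2tω₂, -2tω₃)`. The first
condition of `K^α` is `t|ω₃| ≤ -α t ω₁`, and the two halves of the second one are
`t(ω₂ - αω₁) ≤ α` and `-αω₁ ≤ ω₂`; dividing by `t > 0` gives the claims. -/

@[simp]
lemma pt3_apply_zero (a b c : ℝ) : pt3 a b c 0 = a := rfl

@[simp]
lemma pt3_apply_one (a b c : ℝ) : pt3 a b c 1 = b := rfl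

@[simp]
lemma pt3_apply_two (a b c : ℝ) : pt3 a b c 2 = c := rfl

lemma reflMap_apply (ω : EuclideanSpace ℝ (Fin 3)) (lam : ℝ) (x : EuclideanSpace ℝ (Fin 3))
    (i : Fin 3) : reflMap ω lam x i = x i - 2 * (⟪x, ω⟫ - lam) * ω i := by
  simp [reflMap, real_inner_comm]

theorem reflect_z1_conditions_general (α : ℝ) (hα : 0 < α)
    (ω : EuclideanSpace ℝ (Fin 3)) (lam : ℝ)
    (h1 : lam < ⟪pt3 0 α 0, ω⟫)
    (h2 : reflMap ω lam (pt3 0 α 0) ∈ Kα α) :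
    |ω 2| ≤ -(α * ω 0) ∧ -(α * ω 0) ≤ ω 1 ∧
      (ω 1 - α * ω 0) * (⟪pt3 0 α 0, ω⟫ - lam) ≤ α ∧
      ω 0 ≤ 0 ∧ 0 ≤ ω 1 := by
  set t := ⟪pt3 0 α 0, ω⟫ - lam
  have ht : 0 < t := sub_pos.mpr h1
  obtain ⟨hK₁, hK₂⟩ : 2 * t * |ω 2| ≤ 2 * t * -(α * ω 0) ∧
      |α - 2 * t * ω 1| ≤ α * (1 + 2 * t * ω 0) := by
    simp only [Kα, Set.mem_ofPred_eq, reflMap_apply, pt3_apply_zero, pt3_apply_one,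
      pt3_apply_two] at h2
    rw [zero_sub, abs_neg, abs_mul, abs_of_pos (by positivity : 0 < 2 * t)] at h2
    constructor <;> linarith [h2.1, h2.2]
  have hω₂ : |ω 2| ≤ -(α * ω 0) := le_of_mul_le_mul_left hK₁ (by positivity)
  obtain ⟨hlow, hupp⟩ := abs_le.mp hK₂
  have hω₁ : -(α * ω 0) ≤ ω 1 := by nlinarith
  have hαω₀ : 0 ≤ -(α * ω 0) := (abs_nonneg _).trans hω₂
  have hω₀ : ω 0 ≤ 0 := by nlinarith
  exact ⟨hω₂, hω₁, by nlinarith, hω₀, hαω₀.trans hω₁⟩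

/-- If `⟨z₁, ω⟩ > λ` and `T_{λ,ω}(z₁) ∈ K^α` with `z₁ = (0,α,0)`, then
`|ω₃| ≤ -α ω₁ ≤ ω₂` and `α ≥ (ω₂ - α ω₁)(⟨z₁,ω⟩ - λ)`; in particular `ω₁ ≤ 0 ≤ ω₂`. -/
theorem reflect_z1_conditions (α : ℝ) (hα : 0 < α)
    (ω : EuclideanSpace ℝ (Fin 3)) (hω : ‖ω‖ = 1) (lam : ℝ)
    (h1 : lam < ⟪pt3 0 α 0, ω⟫)
    (h2 : reflMap ω lam (pt3 0 α 0) ∈ Kα α) :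
    |ω 2| ≤ -(α * ω 0) ∧ -(α * ω 0) ≤ ω 1 ∧
      (ω 1 - α * ω 0) * (⟪pt3 0 α 0, ω⟫ - lam) ≤ α ∧
      ω 0 ≤ 0 ∧ 0 ≤ ω 1 :=
  reflect_z1_conditions_general α hα ω lam h1 h2
end

section
/- Let α > 0, ω ∈ S², λ ∈ ℝ with ⟨z₁,ω⟩ > λ and T_{λ,ω}(z₁) ∈ K^α, where z₁ = (0,α,0). If additionally ⟨z₂,ω⟩ > λ and T_{λ,ω}(z₂) ∈ K^α, where z₂ = (0,−α,0), then a contradiction follows (i.e., ω = 0, impossible for a unit vector). Consequently ⟨z₂,ω⟩ ≤ λ, hence −λ ≤ ⟨z₁,ω⟩, and sup{⟨z,ω⟩ : z ∈ K^α} = ⟨z₁,ω⟩. -/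
/-!
For `zᵢ = (0, ±α, 0)` with `⟪zᵢ, ω⟫ > λ` put `t = 2 (⟪zᵢ, ω⟫ - λ) > 0`, so that
`T_{λ,ω}(zᵢ) = zᵢ - t ω`. Membership of `T(z₁)` in `K^α` forces `|ω 2| ≤ -α ω 0` and
`-α ω 0 ≤ ω 1`, membership of `T(z₂)` would force `ω 1 ≤ α ω 0`; together they give `ω = 0`.
As `z₂ ∈ K^α`, the folding hypothesis therefore excludes `⟪z₂, ω⟫ > λ`, and the sign
conditions on `ω` make `⟪·, ω⟫` maximal over `K^α` at the vertex `z₁`.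
-/

open scoped RealInnerProductSpace

/-- The cap `{x ∈ K^α : ⟨x,ω⟩ ≥ λ}`. -/
noncomputable def capKα (α : ℝ) (ω : EuclideanSpace ℝ (Fin 3)) (lam : ℝ) :
    Set (EuclideanSpace ℝ (Fin 3)) :=
  {x ∈ Kα α | lam ≤ ⟪x, ω⟫}

lemma inner_eq_sum_three (x y : EuclideanSpace ℝ (Fin 3)) :
    ⟪x, y⟫ = x 0 * y 0 + x 1 * y 1 + x 2 * y 2 := by
  simp only [PiLp.inner_apply, Fin.sum_univ_three, RCLike.inner_apply, conj_trivial]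
  ring

lemma inner_pt3 (a b c : ℝ) (ω : EuclideanSpace ℝ (Fin 3)) :
    ⟪pt3 a b c, ω⟫ = a * ω 0 + b * ω 1 + c * ω 2 := by
  simp [inner_eq_sum_three]

lemma mem_Kα_pt3 {α a b c : ℝ} : pt3 a b c ∈ Kα α ↔ |c| ≤ α * a ∧ |b| ≤ α * (1 - a) := by
  simp [Kα]

lemma pt3_axis_mem_Kα {α b : ℝ} (hb : |b| = α) : pt3 0 b 0 ∈ Kα α := by
  simp [mem_Kα_pt3, hb]

lemma reflMap_pt3_axis (ω : EuclideanSpace ℝ (Fin 3)) (lam b : ℝ) :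
    reflMap ω lam (pt3 0 b 0) =
      pt3 (-(2 * (b * ω 1 - lam) * ω 0)) (b - 2 * (b * ω 1 - lam) * ω 1)
        (-(2 * (b * ω 1 - lam) * ω 2)) := by
  have hinner : ⟪ω, pt3 0 b 0⟫ = b * ω 1 := by rw [real_inner_comm, inner_pt3]; ring
  ext i
  fin_cases i <;> simp [reflMap, hinner]

section AxisPoint

variable {α b lam : ℝ} {ω : EuclideanSpace ℝ (Fin 3)}
  (hlt : lam < ⟪pt3 0 b 0, ω⟫) (hmem : reflMap ω lam (pt3 0 b 0) ∈ Kα α)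
include hlt hmem

lemma abs_apply_two_le_of_reflMap_mem : |ω 2| ≤ -(α * ω 0) := by
  rw [reflMap_pt3_axis, mem_Kα_pt3] at hmem
  rw [inner_pt3] at hlt
  set t := 2 * (b * ω 1 - lam)
  have ht : 0 < t := by linarith
  have : t * |ω 2| ≤ t * -(α * ω 0) := by
    rw [← abs_of_pos ht, ← abs_mul, abs_of_pos ht, ← abs_neg]
    linarith [hmem.1]
  exact le_of_mul_le_mul_left this ht

lemma neg_sq_mul_apply_zero_le_of_reflMap_mem (hb : |b| = α) : -(α ^ 2 * ω 0) ≤ b * ω 1 := by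
  rw [reflMap_pt3_axis, mem_Kα_pt3] at hmem
  rw [inner_pt3] at hlt
  set t := 2 * (b * ω 1 - lam)
  have ht : 0 < t := by linarith
  have hα : 0 ≤ α := hb ▸ abs_nonneg b
  have hb2 : b ^ 2 = α ^ 2 := by rw [← sq_abs, hb]
  have : t * -(α ^ 2 * ω 0) ≤ t * (b * ω 1) := by
    calc t * -(α ^ 2 * ω 0) = α ^ 2 - α * (α * (1 - -(t * ω 0))) := by ring
      _ ≤ α ^ 2 - |b| * |b - t * ω 1| := by rw [hb]; gcongr; exact hmem.2
      _ ≤ α ^ 2 - b * (b - t * ω 1) := by rw [← abs_mul]; gcongr; exact le_abs_self _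
      _ = t * (b * ω 1) := by rw [mul_sub, ← sq, hb2]; ring
  exact le_of_mul_le_mul_left this ht

end AxisPoint

lemma inner_le_inner_pt3_of_mem_Kα {α : ℝ} (hα : 0 < α) {ω z : EuclideanSpace ℝ (Fin 3)}
    (hω₂ : |ω 2| ≤ -(α * ω 0)) (hω₁ : -(α ^ 2 * ω 0) ≤ α * ω 1) (hz : z ∈ Kα α) :
    ⟪z, ω⟫ ≤ ⟪pt3 0 α 0, ω⟫ := by
  obtain ⟨hz₂, hz₁⟩ := hz
  have hω₀ : ω 0 ≤ 0 := by nlinarith [abs_nonneg (ω 2)]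
  have hz₀ : 0 ≤ z 0 := by nlinarith [abs_nonneg (z 2)]
  have hω₁' : 0 ≤ ω 1 := by nlinarith
  have h₁ : z 1 * ω 1 ≤ α * (1 - z 0) * ω 1 :=
    (le_abs_self _).trans (by rw [abs_mul, abs_of_nonneg hω₁']; gcongr)
  have h₂ : z 2 * ω 2 ≤ α * z 0 * -(α * ω 0) :=
    (le_abs_self _).trans (by rw [abs_mul]; gcongr)
  rw [inner_eq_sum_three, inner_pt3]
  nlinarith [mul_nonneg hz₀ (neg_nonneg.mpr hω₀)]

lemma eq_zero_of_apply_eq_zero {ω : EuclideanSpace ℝ (Fin 3)}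
    (h₀ : ω 0 = 0) (h₁ : ω 1 = 0) (h₂ : ω 2 = 0) : ω = 0 := by
  ext i
  fin_cases i <;> simp [h₀, h₁, h₂]

lemma eq_zero_of_reflMap_axis_mem {α lam : ℝ} (hα : 0 < α) {ω : EuclideanSpace ℝ (Fin 3)}
    (hlt₁ : lam < ⟪pt3 0 α 0, ω⟫) (hmem₁ : reflMap ω lam (pt3 0 α 0) ∈ Kα α)
    (hlt₂ : lam < ⟪pt3 0 (-α) 0, ω⟫) (hmem₂ : reflMap ω lam (pt3 0 (-α) 0) ∈ Kα α) :
    ω = 0 := by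
  have hω₂ := abs_apply_two_le_of_reflMap_mem hlt₁ hmem₁
  have hup := neg_sq_mul_apply_zero_le_of_reflMap_mem hlt₁ hmem₁ (abs_of_pos hα)
  have hdown := neg_sq_mul_apply_zero_le_of_reflMap_mem hlt₂ hmem₂
    (by rw [abs_neg, abs_of_pos hα])
  have h₀ : ω 0 = 0 := by
    have hle : ω 0 ≤ 0 := nonpos_of_mul_nonpos_right (by linarith [abs_nonneg (ω 2)]) hα
    have hge : 0 ≤ ω 0 := nonneg_of_mul_nonneg_right (by linarith) (by positivity : 0 < α ^ 2)
    exact le_antisymm hle hge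
  rw [h₀, mul_zero, neg_zero] at hω₂ hup hdown
  have h₁ : ω 1 = 0 := by nlinarith
  exact eq_zero_of_apply_eq_zero h₀ h₁ (abs_nonpos_iff.mp hω₂)

/-- With `z₁ = (0,α,0)`, `z₂ = (0,-α,0)`: if the cap above level `λ` folds into `K^α`
and `⟨z₁,ω⟩ > λ`, `T_{λ,ω}(z₁) ∈ K^α`, then assuming additionally `⟨z₂,ω⟩ > λ` and
`T_{λ,ω}(z₂) ∈ K^α` yields a contradiction; consequently `⟨z₂,ω⟩ ≤ λ`, hence
`-λ ≤ ⟨z₁,ω⟩`, and `sup {⟨z,ω⟩ : z ∈ K^α} = ⟨z₁,ω⟩`. -/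
theorem z2_below_and_sup_at_z1 (α : ℝ) (hα : 0 < α)
    (ω : EuclideanSpace ℝ (Fin 3)) (hω : ‖ω‖ = 1) (lam : ℝ)
    (hfold : reflMap ω lam '' capKα α ω lam ⊆ Kα α)
    (h1 : lam < ⟪pt3 0 α 0, ω⟫)
    (h2 : reflMap ω lam (pt3 0 α 0) ∈ Kα α) :
    (lam < ⟪pt3 0 (-α) 0, ω⟫ → reflMap ω lam (pt3 0 (-α) 0) ∈ Kα α → False) ∧
    ⟪pt3 0 (-α) 0, ω⟫ ≤ lam ∧
    -lam ≤ ⟪pt3 0 α 0, ω⟫ ∧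
    IsLUB ((fun z => ⟪z, ω⟫) '' Kα α) ⟪pt3 0 α 0, ω⟫ := by
  have hz₁ : pt3 0 α 0 ∈ Kα α := pt3_axis_mem_Kα (abs_of_pos hα)
  have hz₂ : pt3 0 (-α) 0 ∈ Kα α := pt3_axis_mem_Kα (by rw [abs_neg, abs_of_pos hα])
  have hfalse (hlt : lam < ⟪pt3 0 (-α) 0, ω⟫) (hmem : reflMap ω lam (pt3 0 (-α) 0) ∈ Kα α) :
      False := by
    have := eq_zero_of_reflMap_axis_mem hα h1 h2 hlt hmem
    simp [this] at hω
  have hbelow : ⟪pt3 0 (-α) 0, ω⟫ ≤ lam :=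
    not_lt.mp fun hlt => hfalse hlt (hfold ⟨_, ⟨hz₂, hlt.le⟩, rfl⟩)
  refine ⟨hfalse, hbelow, ?_, ?_, fun b hb => hb ⟨_, hz₁, rfl⟩⟩
  · rw [inner_pt3] at hbelow ⊢
    linarith
  · rintro _ ⟨z, hz, rfl⟩
    exact inner_le_inner_pt3_of_mem_Kα hα (abs_apply_two_le_of_reflMap_mem h1 h2)
      (neg_sq_mul_apply_zero_le_of_reflMap_mem h1 h2 (abs_of_pos hα)) hz
end
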